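/- (Spontaneous ℤ₂ symmetry breaking / shock formation.) For t > 0 consider F_t(y) = y²/(2t) − log cosh y on ℝ. If 0 < t ≤ 1, then y = 0 is the unique global minimizer of F_t, and y = 0 is the only solution of y = t·tanh y. If t > 1, then the equation y = t·tanh y has exactly one solution y*(t) > 0, and the set of global minimizers of F_t is exactly { y*(t), −y*(t) }; in particular the Hopf–Lax minimizer at x = 0 is non-unique for every t > 1. -/

import Mathlib

/-!
The derivative of `F_t` is `y/t - tanh y = y (1/t - tanh y / y)`. Since `tanh` is strictly
concave on `[0, ∞)` with `tanh 0 = 0` and `tanh' 0 = 1`, the secant slope `tanh y / y` decreases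
strictly from `1` (as `y → 0⁺`) towards `0`. For `t ≤ 1` it stays below `1/t`, so `F_t`
increases strictly on `[0, ∞)`; for `t > 1` it crosses `1/t` at exactly one point `y⋆ > 0`,
which is then the unique positive root of `y = t tanh y`, and `F_t` decreases on `[0, y⋆]` and
increases on `[y⋆, ∞)`. Since `F_t` is even, its minimizers are `0` in the first case and
`±y⋆` in the second.
-/

open Real Set Filter Topology

namespace Real

theorem hasDerivAt_tanh (x : ℝ) : HasDerivAt tanh (1 - tanh x ^ 2) x := by
  have h := (hasDerivAt_sinh x).div (hasDerivAt_cosh x) (cosh_pos x).ne'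
  rw [show sinh / cosh = tanh from funext fun y => (tanh_eq_sinh_div_cosh y).symm] at h
  refine h.congr_deriv ?_
  rw [tanh_eq_sinh_div_cosh, div_pow, one_sub_div (pow_ne_zero 2 (cosh_pos x).ne')]
  ring

theorem deriv_tanh : deriv tanh = fun x => 1 - tanh x ^ 2 :=
  funext fun x => (hasDerivAt_tanh x).deriv

theorem continuous_tanh : Continuous tanh :=
  continuous_iff_continuousAt.2 fun x => (hasDerivAt_tanh x).continuousAt

theorem strictMono_tanh : StrictMono tanh :=
  strictMono_of_deriv_pos fun x => by
    rw [deriv_tanh]; exact sub_pos.2 (tanh_sq_lt_one x)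

theorem tanh_pos {x : ℝ} (hx : 0 < x) : 0 < tanh x := by
  simpa using strictMono_tanh hx

theorem strictConcaveOn_tanh : StrictConcaveOn ℝ (Ici 0) tanh := by
  refine StrictAntiOn.strictConcaveOn_of_deriv (convex_Ici 0) continuous_tanh.continuousOn ?_
  rw [interior_Ici, deriv_tanh]
  intro x hx y _ hxy
  exact sub_lt_sub_left (pow_lt_pow_left₀ (strictMono_tanh hxy) (tanh_pos hx).le two_ne_zero) 1

theorem slope_tanh_zero (x : ℝ) : slope tanh 0 x = tanh x / x := by
  simp [slope_def_field]

theorem tanh_lt_self {x : ℝ} (hx : 0 < x) : tanh x < x := by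
  have h := strictConcaveOn_tanh.slope_lt_of_hasDerivAt self_mem_Ici hx.le hx (hasDerivAt_tanh 0)
  rwa [slope_tanh_zero, tanh_zero, div_lt_iff₀ hx, zero_pow two_ne_zero, sub_zero, one_mul] at h

theorem strictAntiOn_tanh_div_self : StrictAntiOn (fun x => tanh x / x) (Ioi 0) := by
  intro x hx y hy hxy
  have h := strictConcaveOn_tanh.secant_strict_mono self_mem_Ici (mem_Ici_of_Ioi hx)
    (mem_Ici_of_Ioi hy) hx.ne' hy.ne' hxy
  simpa using h

theorem tendsto_tanh_div_self : Tendsto (fun x => tanh x / x) (𝓝[>] 0) (𝓝 1) := by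
  have h := hasDerivAt_iff_tendsto_slope.1 (hasDerivAt_tanh 0)
  simp only [tanh_zero, zero_pow two_ne_zero, sub_zero] at h
  refine (h.mono_left (nhdsWithin_mono 0 fun y hy => (mem_Ioi.1 hy).ne')).congr fun x => ?_
  exact slope_tanh_zero x

theorem exists_tanh_div_self_eq {c : ℝ} (hc0 : 0 < c) (hc1 : c < 1) :
    ∃ y, 0 < y ∧ tanh y / y = c := by
  obtain ⟨a, hac, ha⟩ := ((tendsto_tanh_div_self.eventually (eventually_gt_nhds hc1)).and
    (Ioo_mem_nhdsGT (inv_pos.2 hc0))).exists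
  have hb : tanh c⁻¹ / c⁻¹ < c := by
    rw [div_inv_eq_mul]; exact mul_lt_of_lt_one_left hc0 (tanh_lt_one _)
  have hcont : ContinuousOn (fun x => tanh x / x) (Icc a c⁻¹) :=
    continuous_tanh.continuousOn.div continuousOn_id fun x hx => (ha.1.trans_le hx.1).ne'
  obtain ⟨y, hy, hyc⟩ := intermediate_value_Icc' ha.2.le hcont ⟨hb.le, hac.le⟩
  exact ⟨y, ha.1.trans_le hy.1, hyc⟩

theorem abs_tanh_lt_abs {x : ℝ} (hx : x ≠ 0) : |tanh x| < |x| := by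
  have h_pos : ∀ x : ℝ, 0 < x → |tanh x| < |x| := fun x hx => by
    rw [abs_of_pos (tanh_pos hx), abs_of_pos hx]; exact tanh_lt_self hx
  rcases hx.lt_or_gt with hx | hx
  · simpa only [tanh_neg, abs_neg] using h_pos (-x) (neg_pos.2 hx)
  · exact h_pos x hx

theorem eq_zero_of_eq_mul_tanh {t y : ℝ} (ht : |t| ≤ 1) (h : y = t * tanh y) : y = 0 := by
  by_contra hy
  have : |y| < |y| :=
    calc |y| = |t| * |tanh y| := by rw [← abs_mul, ← h]
      _ ≤ |tanh y| := mul_le_of_le_one_left (abs_nonneg _) ht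
      _ < |y| := abs_tanh_lt_abs hy
  exact this.false

theorem eq_mul_tanh_iff {t y : ℝ} (ht : t ≠ 0) (hy : y ≠ 0) :
    y = t * tanh y ↔ tanh y / y = t⁻¹ := by
  rw [div_eq_iff hy, eq_comm (a := y), eq_inv_mul_iff_mul_eq₀ ht]

end Real

theorem Function.Even.apply_abs {α β : Type*} [AddGroup α] [LinearOrder α] {f : α → β}
    (hf : f.Even) (x : α) : f |x| = f x := by
  rcases abs_choice x with h | h <;> rw [h]
  exact hf x

section EvenMinimizers

variable {α β : Type*} [AddCommGroup α] [LinearOrder α] [IsOrderedAddMonoid α] [Preorder β]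
  {f : α → β} {a : α}

theorem Function.Even.lt_of_abs_ne (hf : f.Even) (ha : 0 ≤ a)
    (h_anti : StrictAntiOn f (Icc 0 a)) (h_mono : StrictMonoOn f (Ici a)) {y : α}
    (hy : |y| ≠ a) : f a < f y := by
  rw [← hf.apply_abs y]
  rcases hy.lt_or_gt with h | h
  · exact h_anti ⟨abs_nonneg y, h.le⟩ ⟨ha, le_rfl⟩ h
  · exact h_mono self_mem_Ici h.le h

theorem Function.Even.setOf_forall_le_eq (hf : f.Even) (ha : 0 ≤ a)
    (h_anti : StrictAntiOn f (Icc 0 a)) (h_mono : StrictMonoOn f (Ici a)) :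
    {y | ∀ z, f y ≤ f z} = {a, -a} := by
  have h_min : ∀ z, f a ≤ f z := fun z => by
    rcases eq_or_ne |z| a with h | h
    · rw [← hf.apply_abs z, h]
    · exact (hf.lt_of_abs_ne ha h_anti h_mono h).le
  ext y
  simp only [mem_ofPred_eq, mem_insert_iff, mem_singleton_iff, ← abs_eq ha]
  refine ⟨fun hy => ?_, fun hy z => by rw [← hf.apply_abs y, hy]; exact h_min z⟩
  by_contra h
  exact (hf.lt_of_abs_ne ha h_anti h_mono h).not_ge (hy a)

end EvenMinimizers

namespace CurieWeiss

noncomputable def F (t y : ℝ) : ℝ := y ^ 2 / (2 * t) - log (cosh y)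

theorem F_even (t : ℝ) : (F t).Even := fun y => by simp [F]

theorem continuous_F (t : ℝ) : Continuous (F t) := by
  unfold F
  exact ((continuous_pow 2).div_const _).sub (continuous_cosh.log fun y => (cosh_pos y).ne')

theorem hasDerivAt_F (t y : ℝ) : HasDerivAt (F t) (y / t - tanh y) y := by
  have h := ((hasDerivAt_pow 2 y).div_const (2 * t)).sub
    ((hasDerivAt_cosh y).log (cosh_pos y).ne')
  refine h.congr_deriv ?_
  rw [tanh_eq_sinh_div_cosh]
  ring

theorem deriv_F_eq_mul {t y : ℝ} (hy : y ≠ 0) : deriv (F t) y = y * (t⁻¹ - tanh y / y) := by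
  rw [(hasDerivAt_F t y).deriv]
  field_simp

theorem strictMonoOn_F_Ici_zero {t : ℝ} (ht : 0 < t) (ht1 : t ≤ 1) :
    StrictMonoOn (F t) (Ici 0) := by
  refine strictMonoOn_of_deriv_pos (convex_Ici 0) (continuous_F t).continuousOn fun y hy => ?_
  rw [interior_Ici] at hy
  rw [deriv_F_eq_mul hy.ne']
  refine mul_pos hy (sub_pos.2 ?_)
  calc tanh y / y < 1 := (div_lt_one hy).2 (tanh_lt_self hy)
    _ ≤ t⁻¹ := one_le_inv₀ ht |>.2 ht1

theorem F_zero_lt {t y : ℝ} (ht : 0 < t) (ht1 : t ≤ 1) (hy : y ≠ 0) : F t 0 < F t y :=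
  (F_even t).lt_of_abs_ne le_rfl ((subsingleton_Icc_of_ge le_rfl).strictAntiOn _)
    (strictMonoOn_F_Ici_zero ht ht1) (abs_ne_zero.2 hy)

theorem strictAntiOn_F_Icc {t ystar : ℝ} (hystar : 0 < ystar)
    (hstar : tanh ystar / ystar = t⁻¹) :
    StrictAntiOn (F t) (Icc 0 ystar) := by
  refine strictAntiOn_of_deriv_neg (convex_Icc 0 ystar) (continuous_F t).continuousOn
    fun y hy => ?_
  rw [interior_Icc] at hy
  rw [deriv_F_eq_mul hy.1.ne']
  refine mul_neg_of_pos_of_neg hy.1 (sub_neg.2 ?_)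
  rw [← hstar]
  exact strictAntiOn_tanh_div_self hy.1 hystar hy.2

theorem strictMonoOn_F_Ici {t ystar : ℝ} (hystar : 0 < ystar)
    (hstar : tanh ystar / ystar = t⁻¹) :
    StrictMonoOn (F t) (Ici ystar) := by
  refine strictMonoOn_of_deriv_pos (convex_Ici ystar) (continuous_F t).continuousOn
    fun y hy => ?_
  rw [interior_Ici] at hy
  rw [deriv_F_eq_mul (hystar.trans hy).ne']
  refine mul_pos (hystar.trans hy) (sub_pos.2 ?_)
  rw [← hstar]
  exact strictAntiOn_tanh_div_self hystar (hystar.trans hy) hy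

end CurieWeiss

theorem cw_spontaneous_symmetry_breaking (t : ℝ) (ht : 0 < t) :
    (t ≤ 1 →
      (∀ y : ℝ, y ≠ 0 →
        (0 : ℝ) ^ 2 / (2 * t) - Real.log (Real.cosh 0)
          < y ^ 2 / (2 * t) - Real.log (Real.cosh y)) ∧
      (∀ y : ℝ, y = t * Real.tanh y → y = 0)) ∧
    (1 < t →
      ∃ ystar : ℝ, 0 < ystar ∧ ystar = t * Real.tanh ystar ∧
        (∀ y : ℝ, 0 < y → y = t * Real.tanh y → y = ystar) ∧
        {y : ℝ | ∀ z : ℝ, y ^ 2 / (2 * t) - Real.log (Real.cosh y)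
            ≤ z ^ 2 / (2 * t) - Real.log (Real.cosh z)}
          = {ystar, -ystar}) := by
  refine ⟨fun ht1 => ⟨fun y hy => CurieWeiss.F_zero_lt ht ht1 hy,
    fun y => eq_zero_of_eq_mul_tanh (by rwa [abs_of_pos ht])⟩, fun ht1 => ?_⟩
  obtain ⟨ystar, hystar, hstar⟩ :=
    exists_tanh_div_self_eq (inv_pos.2 ht) (inv_lt_one_of_one_lt₀ ht1)
  have h_fixed {y : ℝ} (hy : 0 < y) : y = t * tanh y ↔ tanh y / y = t⁻¹ :=
    eq_mul_tanh_iff ht.ne' hy.ne'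
  refine ⟨ystar, hystar, (h_fixed hystar).2 hstar, fun y hy hyt => ?_, ?_⟩
  · exact strictAntiOn_tanh_div_self.injOn hy hystar (((h_fixed hy).1 hyt).trans hstar.symm)
  · exact (CurieWeiss.F_even t).setOf_forall_le_eq hystar.le
      (CurieWeiss.strictAntiOn_F_Icc hystar hstar) (CurieWeiss.strictMonoOn_F_Ici hystar hstar)
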